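/- arXiv:2104.04921 — 3 statements merged into one kernel-verified Lean document; each statement's English description precedes it below -/
import Mathlib

section
/- For any real r ≠ 0, the image of S²(r) under the matrix exponential equals the set {g ∈ SU(2) : tr(g) = 2cos(r)}. -/
noncomputable def mexp (A : Matrix (Fin 2) (Fin 2) ℂ) : Matrix (Fin 2) (Fin 2) ℂ :=
  NormedSpace.exp A

/-- The 2-sphere `S²(r) ⊂ 𝔰𝔲(2)`. -/
def S2m (r : ℝ) : Set (Matrix (Fin 2) (Fin 2) ℂ) :=
  {A | ∃ (x : ℝ) (z : ℂ), x ^ 2 + ‖z‖ ^ 2 = r ^ 2 ∧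
    A = !![(x : ℂ) * Complex.I, z; -(starRingEnd ℂ z), -((x : ℂ) * Complex.I)]}

open Matrix Complex

attribute [local instance] Matrix.linftyOpNormedAddCommGroup Matrix.linftyOpNormedRing
  Matrix.linftyOpNormedAlgebra

lemma sq_lem (r x : ℝ) (z : ℂ) (h : x ^ 2 + ‖z‖ ^ 2 = r ^ 2) :
    (!![(x : ℂ) * Complex.I, z; -(starRingEnd ℂ z), -((x : ℂ) * Complex.I)]) ^ 2
      = (-(r:ℂ)^2) • (1 : Matrix (Fin 2) (Fin 2) ℂ) := by
  have hc : (x:ℂ)^2 + ((‖z‖ : ℝ):ℂ)^2 = (r:ℂ)^2 := by exact_mod_cast h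
  have h2 : z * (starRingEnd ℂ z) = ((‖z‖ : ℝ) : ℂ)^2 := by
    rw [Complex.mul_conj]; norm_cast; exact (Complex.sq_norm z).symm
  have h3 : (starRingEnd ℂ z) * z = ((‖z‖ : ℝ) : ℂ)^2 := by
    rw [mul_comm]; exact h2
  rw [pow_two]
  ext i j
  fin_cases i <;> fin_cases j
  · simp [Matrix.mul_apply, Fin.sum_univ_two, Matrix.one_apply]
    linear_combination (x:ℂ)^2 * Complex.I_sq - hc - h2
  · simp [Matrix.mul_apply, Fin.sum_univ_two, Matrix.one_apply]
    ring
  · simp [Matrix.mul_apply, Fin.sum_univ_two, Matrix.one_apply]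
    ring
  · simp [Matrix.mul_apply, Fin.sum_univ_two, Matrix.one_apply]
    linear_combination (x:ℂ)^2 * Complex.I_sq - hc - h3

lemma real_smul_mat (c : ℝ) (M : Matrix (Fin 2) (Fin 2) ℂ) : c • M = ((c:ℂ)) • M := by
  ext i j; simp [Matrix.smul_apply, Complex.real_smul]

lemma exp_formula (r : ℝ) (hr : r ≠ 0) (A : Matrix (Fin 2) (Fin 2) ℂ)
    (hA : A ^ 2 = (-(r:ℂ)^2) • (1 : Matrix (Fin 2) (Fin 2) ℂ)) :
    NormedSpace.exp A = ((Real.cos r : ℝ) : ℂ) • (1 : Matrix (Fin 2) (Fin 2) ℂ)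
      + ((Real.sin r / r : ℝ) : ℂ) • A := by
  have hrC : (r:ℂ) ≠ 0 := by exact_mod_cast hr
  set J : Matrix (Fin 2) (Fin 2) ℂ := ((r:ℂ)⁻¹) • A with hJdef
  have hJ : J * J = -1 := by
    have h' : J * J = ((r:ℂ)⁻¹)^2 • A ^ 2 := by rw [← pow_two, hJdef, smul_pow]
    rw [h', hA, smul_smul, show ((r:ℂ)⁻¹)^2 * (-(r:ℂ)^2) = -1 by field_simp]
    simp
  set φ : ℂ →ₐ[ℝ] Matrix (Fin 2) (Fin 2) ℂ := Complex.liftAux J hJ with hφdef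
  have hφcont : Continuous φ := φ.toLinearMap.continuous_of_finiteDimensional
  have hA' : φ ((r:ℂ) * Complex.I) = A := by
    rw [hφdef, Complex.liftAux_apply]
    simp only [Complex.mul_I_re, Complex.ofReal_im, Complex.mul_I_im, Complex.ofReal_re, neg_zero]
    rw [real_smul_mat, hJdef, smul_smul, map_zero, zero_add, mul_inv_cancel₀ hrC, one_smul]
  have hre : (Complex.cos (r:ℂ) + Complex.sin (r:ℂ) * Complex.I).re = Real.cos r := by
    simp [← Complex.ofReal_cos, ← Complex.ofReal_sin]
  have him : (Complex.cos (r:ℂ) + Complex.sin (r:ℂ) * Complex.I).im = Real.sin r := by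
    simp [← Complex.ofReal_cos, ← Complex.ofReal_sin]
  have e2 : NormedSpace.exp ((r:ℂ) * Complex.I) = Complex.exp ((r:ℂ) * Complex.I) := by
    rw [Complex.exp_eq_exp_ℂ]
  calc NormedSpace.exp A = NormedSpace.exp A := rfl
    _ = NormedSpace.exp (φ ((r:ℂ) * Complex.I)) := by rw [hA']
    _ = φ (NormedSpace.exp ((r:ℂ) * Complex.I)) := (NormedSpace.map_exp φ hφcont _).symm
    _ = φ (Complex.cos (r:ℂ) + Complex.sin (r:ℂ) * Complex.I) := by
        rw [e2, Complex.exp_mul_I]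
    _ = (Real.cos r : ℝ) • (1 : Matrix (Fin 2) (Fin 2) ℂ) + (Real.sin r : ℝ) • J := by
        rw [hφdef, Complex.liftAux_apply, hre, him, Algebra.algebraMap_eq_smul_one]
    _ = ((Real.cos r : ℝ) : ℂ) • (1 : Matrix (Fin 2) (Fin 2) ℂ)
          + ((Real.sin r / r : ℝ) : ℂ) • A := by
        rw [real_smul_mat, real_smul_mat, hJdef, smul_smul]
        congr 1
        rw [Complex.ofReal_div, div_eq_mul_inv]

lemma mem_SU2 (a b : ℂ) (h : a * (starRingEnd ℂ a) + b * (starRingEnd ℂ b) = 1) :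
    !![a, b; -(starRingEnd ℂ b), starRingEnd ℂ a] ∈ Matrix.specialUnitaryGroup (Fin 2) ℂ := by
  rw [Matrix.mem_specialUnitaryGroup_iff]
  constructor
  · rw [Matrix.mem_unitaryGroup_iff]
    ext i j
    fin_cases i <;> fin_cases j <;>
      simp [Matrix.mul_apply, Fin.sum_univ_two, Matrix.one_apply, Matrix.star_apply,
        Matrix.conjTranspose_apply] <;>
      first
        | linear_combination h
        | linear_combination (starRingEnd ℂ a) * a + (starRingEnd ℂ b) * b - h
        | ring
  · rw [Matrix.det_fin_two_of]
    linear_combination h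

lemma SU2_form (g : Matrix (Fin 2) (Fin 2) ℂ) (hg : g ∈ Matrix.specialUnitaryGroup (Fin 2) ℂ) :
    ∃ a b : ℂ, a * (starRingEnd ℂ a) + b * (starRingEnd ℂ b) = 1 ∧
      g = !![a, b; -(starRingEnd ℂ b), starRingEnd ℂ a] := by
  obtain ⟨hu, hdet⟩ := Matrix.mem_specialUnitaryGroup_iff.mp hg
  have hu' : g * star g = 1 := Matrix.mem_unitaryGroup_iff.mp hu
  have hinv : g⁻¹ = star g := Matrix.inv_eq_right_inv hu'
  have hadj : g⁻¹ = Matrix.adjugate g := by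
    rw [Matrix.inv_def, hdet]; simp
  have hsg : star g = Matrix.adjugate g := hinv.symm.trans hadj
  have k1 : starRingEnd ℂ (g 0 0) = g 1 1 := by
    have := congrFun (congrFun hsg 0) 0
    simpa [Matrix.adjugate_fin_two, Matrix.star_apply, Matrix.conjTranspose_apply] using this
  have k2 : starRingEnd ℂ (g 0 1) = -(g 1 0) := by
    have := congrFun (congrFun hsg 1) 0
    simpa [Matrix.adjugate_fin_two, Matrix.star_apply, Matrix.conjTranspose_apply] using this
  rw [Matrix.det_fin_two] at hdet
  refine ⟨g 0 0, g 0 1, ?_, ?_⟩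
  · linear_combination hdet + g 0 0 * k1 + g 0 1 * k2
  · ext i j
    fin_cases i <;> fin_cases j <;> simp
    · first | linear_combination k2 | linear_combination -k2
    · first | linear_combination k1 | linear_combination -k1

lemma mexp_explicit (r x : ℝ) (z : ℂ) (hr : r ≠ 0) (h : x ^ 2 + ‖z‖ ^ 2 = r ^ 2) :
    mexp !![(x : ℂ) * Complex.I, z; -(starRingEnd ℂ z), -((x : ℂ) * Complex.I)] =
      !![((Real.cos r : ℝ) : ℂ) + ((Real.sin r / r : ℝ) : ℂ) * ((x:ℂ) * Complex.I),
         ((Real.sin r / r : ℝ) : ℂ) * z;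
         -(starRingEnd ℂ (((Real.sin r / r : ℝ) : ℂ) * z)),
         starRingEnd ℂ (((Real.cos r : ℝ) : ℂ) + ((Real.sin r / r : ℝ) : ℂ) * ((x:ℂ) * Complex.I))] := by
  rw [mexp, exp_formula r hr _ (sq_lem r x z h)]
  ext i j
  fin_cases i <;> fin_cases j <;>
    simp [Matrix.add_apply, Matrix.smul_apply, Matrix.one_apply, smul_eq_mul, map_add,
      _root_.map_mul, Complex.conj_ofReal, Complex.conj_I, ← Complex.sin_conj,
      ← Complex.cos_conj] <;> try ring

lemma su_cond (r x : ℝ) (z : ℂ) (hr : r ≠ 0) (h : x ^ 2 + ‖z‖ ^ 2 = r ^ 2) :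
    (((Real.cos r : ℝ) : ℂ) + ((Real.sin r / r : ℝ) : ℂ) * ((x:ℂ) * Complex.I)) *
        (starRingEnd ℂ (((Real.cos r : ℝ) : ℂ) + ((Real.sin r / r : ℝ) : ℂ) * ((x:ℂ) * Complex.I)))
      + (((Real.sin r / r : ℝ) : ℂ) * z) * (starRingEnd ℂ (((Real.sin r / r : ℝ) : ℂ) * z)) = 1 := by
  have hreal : Real.cos r ^ 2 + (Real.sin r / r) ^ 2 * r ^ 2 = 1 := by
    field_simp
    try linear_combination Real.sin_sq_add_cos_sq r
    try linear_combination r^2 * Real.sin_sq_add_cos_sq r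
  have hone : ((Real.cos r : ℝ) : ℂ)^2 + ((Real.sin r / r : ℝ) : ℂ)^2 * (r:ℂ)^2 = 1 := by
    exact_mod_cast congrArg (Complex.ofReal) hreal
  have hxzC : (x:ℂ)^2 + ((‖z‖ : ℝ):ℂ)^2 = (r:ℂ)^2 := by exact_mod_cast h
  have hzz : z * (starRingEnd ℂ z) = ((‖z‖ : ℝ) : ℂ)^2 := by
    rw [Complex.mul_conj]; norm_cast; exact (Complex.sq_norm z).symm
  simp only [map_add, _root_.map_mul, Complex.conj_ofReal, Complex.conj_I]
  set c : ℂ := ((Real.sin r / r : ℝ) : ℂ)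
  linear_combination hone + c^2 * hxzC + c^2 * hzz - (c * (x:ℂ))^2 * Complex.I_sq

theorem stmt7 (r : ℝ) (hr : r ≠ 0) :
    mexp '' S2m r =
      {g : Matrix (Fin 2) (Fin 2) ℂ |
        g ∈ Matrix.specialUnitaryGroup (Fin 2) ℂ ∧ g.trace = 2 * Real.cos r} := by
  ext g
  constructor
  · rintro ⟨A, ⟨x, z, hxz, rfl⟩, rfl⟩
    rw [Set.mem_setOf_eq, mexp_explicit r x z hr hxz]
    refine ⟨mem_SU2 _ _ (su_cond r x z hr hxz), ?_⟩
    rw [Matrix.trace_fin_two_of]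
    simp only [map_add, _root_.map_mul, Complex.conj_ofReal, Complex.conj_I]
    ring
  · rintro ⟨hgSU, hgtr⟩
    obtain ⟨a, b, hab, rfl⟩ := SU2_form g hgSU
    have htr : a + starRingEnd ℂ a = 2 * (Real.cos r : ℂ) := by
      simpa [Matrix.trace_fin_two_of] using hgtr
    have hre : a.re = Real.cos r := by
      have h2 : ((2 * a.re : ℝ) : ℂ) = 2 * (Real.cos r : ℂ) := by
        rw [← Complex.add_conj]; exact htr
      have h2' : (2 * a.re : ℝ) = 2 * Real.cos r := by exact_mod_cast h2
      linarith
    have hnorm : a.im ^ 2 + Complex.normSq b = Real.sin r ^ 2 := by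
      have h3 : ((Complex.normSq a : ℝ) : ℂ) + ((Complex.normSq b : ℝ) : ℂ) = 1 := by
        rw [← Complex.mul_conj, ← Complex.mul_conj]; exact hab
      have h4 : Complex.normSq a + Complex.normSq b = 1 := by exact_mod_cast h3
      have h5 : Complex.normSq a = a.re ^ 2 + a.im ^ 2 := by
        rw [Complex.normSq_apply]; ring
      rw [h5, hre] at h4
      nlinarith [Real.sin_sq_add_cos_sq r]
    by_cases hs : Real.sin r = 0
    · have him : a.im = 0 := by nlinarith [Complex.normSq_nonneg b, sq_nonneg a.im]
      have hnb : Complex.normSq b = 0 := by nlinarith [Complex.normSq_nonneg b, sq_nonneg a.im]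
      have hb : b = 0 := by rwa [Complex.normSq_eq_zero] at hnb
      have ha : a = (Real.cos r : ℂ) := by
        apply Complex.ext
        · rw [Complex.ofReal_re, hre]
        · rw [Complex.ofReal_im, him]
      refine ⟨!![(r:ℂ) * Complex.I, (0:ℂ); -(starRingEnd ℂ (0:ℂ)), -((r:ℂ) * Complex.I)],
        ⟨r, 0, by simp, rfl⟩, ?_⟩
      rw [mexp_explicit r r 0 hr (by simp)]
      ext i j
      fin_cases i <;> fin_cases j <;> simp [hs, ha, hb]
    · set c : ℝ := Real.sin r / r with hc
      have hc0 : c ≠ 0 := div_ne_zero hs hr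
      have hcC : (c : ℂ) ≠ 0 := by exact_mod_cast hc0
      set x : ℝ := a.im / c with hx
      set z : ℂ := b / (c : ℂ) with hz
      have hsphere : x ^ 2 + ‖z‖ ^ 2 = r ^ 2 := by
        have habs : ‖z‖ ^ 2 = Complex.normSq b / c ^ 2 := by
          rw [hz, Complex.sq_norm, Complex.normSq_div]
          norm_num [Complex.normSq_ofReal]
          ring
        rw [habs, hx]
        rw [hc] at *
        field_simp
        nlinarith [hnorm]
      have key : ((Real.cos r : ℝ) : ℂ) + ((Real.sin r / r : ℝ) : ℂ) * ((x:ℂ) * Complex.I) = a := by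
        rw [← hc]
        have hcx : c * x = a.im := by rw [hx]; field_simp
        rw [← Complex.re_add_im a, hre]
        rw [← mul_assoc, ← Complex.ofReal_mul, hcx]
      have bkey : ((Real.sin r / r : ℝ) : ℂ) * z = b := by
        rw [← hc, hz, mul_div_cancel₀ _ hcC]
      refine ⟨!![(x:ℂ) * Complex.I, z; -(starRingEnd ℂ z), -((x:ℂ) * Complex.I)],
        ⟨x, z, hsphere, rfl⟩, ?_⟩
      rw [mexp_explicit r x z hr hsphere, key, bkey]
end

section
/- The map h : S²_ℝ → S²(π/2), h(x₁, x₂, x₃) = (π/2)·[[x₁i, x₂ + x₃i], [−x₂ + x₃i, −x₁i]], is a quandle isomorphism from the spherical quandle (S², x ▷ y = 2⟨x,y⟩y − x) to the augmented quandle (S²(π/2), SU(2), exp) with operation X ▷ Y = exp(Y)⁻¹ X exp(Y); i.e., h is bijective and h(x ▷ y) = h(x) ▷ h(y) for all x, y ∈ S². -/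
open scoped RealInnerProductSpace

noncomputable def sphOp (x y : EuclideanSpace ℝ (Fin 3)) : EuclideanSpace ℝ (Fin 3) :=
  (2 * ⟪x, y⟫) • y - x

def unitSph : Set (EuclideanSpace ℝ (Fin 3)) := {x | ⟪x, x⟫ = 1}

noncomputable def hmap (v : EuclideanSpace ℝ (Fin 3)) : Matrix (Fin 2) (Fin 2) ℂ :=
  ((Real.pi / 2 : ℝ) : ℂ) •
    !![(v 0 : ℂ) * Complex.I, (v 1 : ℂ) + (v 2 : ℂ) * Complex.I;
       -(v 1 : ℂ) + (v 2 : ℂ) * Complex.I, -((v 0 : ℂ) * Complex.I)]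

/-! ### Auxiliary definitions and lemmas -/

noncomputable def Umat (v : EuclideanSpace ℝ (Fin 3)) : Matrix (Fin 2) (Fin 2) ℂ :=
  !![(v 0 : ℂ) * Complex.I, (v 1 : ℂ) + (v 2 : ℂ) * Complex.I;
     -(v 1 : ℂ) + (v 2 : ℂ) * Complex.I, -((v 0 : ℂ) * Complex.I)]

lemma hmap_eq (v : EuclideanSpace ℝ (Fin 3)) :
    hmap v = ((Real.pi / 2 : ℝ) : ℂ) • Umat v := rfl

lemma inner_expand (x y : EuclideanSpace ℝ (Fin 3)) :
    ⟪x,y⟫ = x 0 * y 0 + x 1 * y 1 + x 2 * y 2 := by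
  simp [PiLp.inner_apply, RCLike.inner_apply, Fin.sum_univ_three]
  ring

lemma Umat_sq (y : EuclideanSpace ℝ (Fin 3)) (hy : ⟪y,y⟫ = 1) :
    Umat y * Umat y = -1 := by
  have hi : y 0 * y 0 + y 1 * y 1 + y 2 * y 2 = 1 := by rw [← hy, inner_expand]
  have hC : (y 0:ℂ)*(y 0:ℂ) + (y 1:ℂ)*(y 1:ℂ) + (y 2:ℂ)*(y 2:ℂ) = 1 := by
    have := congrArg Complex.ofReal hi; push_cast at this; exact this
  ext i j
  fin_cases i <;> fin_cases j
  · simp [Umat, Matrix.mul_apply, Fin.sum_univ_succ]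
    linear_combination -hC + ((y 0:ℂ)*(y 0:ℂ) + (y 2:ℂ)*(y 2:ℂ)) * Complex.I_sq
  · simp [Umat, Matrix.mul_apply, Fin.sum_univ_succ]
    try ring
  · simp [Umat, Matrix.mul_apply, Fin.sum_univ_succ]
    try ring
  · simp [Umat, Matrix.mul_apply, Fin.sum_univ_succ]
    linear_combination -hC + ((y 0:ℂ)*(y 0:ℂ) + (y 2:ℂ)*(y 2:ℂ)) * Complex.I_sq

lemma Umat_anticomm (x y : EuclideanSpace ℝ (Fin 3)) :
    Umat x * Umat y + Umat y * Umat x = ((-2 * ⟪x,y⟫ : ℝ) : ℂ) • 1 := by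
  have hi := inner_expand x y
  ext i j
  fin_cases i <;> fin_cases j
  · simp [Umat, Matrix.mul_apply, Fin.sum_univ_succ, Matrix.one_apply, hi]
    push_cast
    linear_combination (2*(x 0:ℂ)*(y 0:ℂ) + 2*(x 2:ℂ)*(y 2:ℂ)) * Complex.I_sq
  · simp [Umat, Matrix.mul_apply, Fin.sum_univ_succ, Matrix.one_apply, hi]
    try ring
  · simp [Umat, Matrix.mul_apply, Fin.sum_univ_succ, Matrix.one_apply, hi]
    try ring
  · simp [Umat, Matrix.mul_apply, Fin.sum_univ_succ, Matrix.one_apply, hi]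
    push_cast
    linear_combination (2*(x 0:ℂ)*(y 0:ℂ) + 2*(x 2:ℂ)*(y 2:ℂ)) * Complex.I_sq

lemma exp_key (U : Matrix (Fin 2) (Fin 2) ℂ) (hU : U * U = -1) :
    NormedSpace.exp ((((Real.pi/2 : ℝ)) : ℂ) • U) = U := by
  letI : SeminormedRing (Matrix (Fin 2) (Fin 2) ℂ) := Matrix.linftyOpSemiNormedRing
  letI : NormedRing (Matrix (Fin 2) (Fin 2) ℂ) := Matrix.linftyOpNormedRing
  letI : NormedAlgebra ℝ (Matrix (Fin 2) (Fin 2) ℂ) := Matrix.linftyOpNormedAlgebra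
  letI : NormedAlgebra ℂ (Matrix (Fin 2) (Fin 2) ℂ) := Matrix.linftyOpNormedAlgebra
  let φ := Complex.liftAux U hU
  have hcont : Continuous φ := φ.toLinearMap.continuous_of_finiteDimensional
  have h1 : (((Real.pi/2 : ℝ)) : ℂ) • U = φ ((Real.pi/2 : ℝ) * Complex.I) := by
    simp only [φ, Complex.liftAux_apply]
    simp only [Complex.mul_I_re, Complex.mul_I_im, Complex.ofReal_re, Complex.ofReal_im,
      neg_zero, map_zero, zero_add]
    rw [← Complex.coe_algebraMap, algebraMap_smul]
  rw [h1]
  erw [← NormedSpace.map_exp φ hcont,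
    ← Complex.exp_eq_exp_ℂ]
  rw [Complex.exp_mul_I]
  simp [φ, Complex.liftAux_apply]

lemma mexp_hmap (y : EuclideanSpace ℝ (Fin 3)) (hy : y ∈ unitSph) :
    mexp (hmap y) = Umat y :=
  exp_key (Umat y) (Umat_sq y hy)

lemma mexp_hmap_inv (y : EuclideanSpace ℝ (Fin 3)) (hy : y ∈ unitSph) :
    (mexp (hmap y))⁻¹ = -(Umat y) := by
  rw [mexp_hmap y hy]
  apply Matrix.inv_eq_right_inv
  rw [Matrix.mul_neg, Umat_sq y hy]; simp

lemma Umat_sphOp (x y : EuclideanSpace ℝ (Fin 3)) :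
    Umat (sphOp x y) = ((2 * ⟪x,y⟫ : ℝ) : ℂ) • Umat y - Umat x := by
  have hs : ∀ i, sphOp x y i = 2 * ⟪x,y⟫ * y i - x i := by
    intro i; simp [sphOp]
  ext i j
  fin_cases i <;> fin_cases j <;>
    simp [Umat, hs] <;> push_cast <;> ring

theorem stmt14 :
    Set.BijOn hmap unitSph (S2m (Real.pi / 2)) ∧
    ∀ x ∈ unitSph, ∀ y ∈ unitSph,
      hmap (sphOp x y) = (mexp (hmap y))⁻¹ * hmap x * mexp (hmap y) := by
  have hπ : (Real.pi : ℝ) ≠ 0 := Real.pi_ne_zero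
  constructor
  · refine ⟨?_, ?_, ?_⟩
    · -- MapsTo
      intro v hv
      refine ⟨Real.pi/2 * v 0, ((Real.pi/2 * v 1 : ℝ) : ℂ) + ((Real.pi/2 * v 2 : ℝ) : ℂ) * Complex.I, ?_, ?_⟩
      · have h1 : v 0 * v 0 + v 1 * v 1 + v 2 * v 2 = 1 := by
          rw [← inner_expand]; exact hv
        rw [Complex.sq_norm, Complex.normSq_apply]
        simp only [Complex.add_re, Complex.add_im, Complex.ofReal_re, Complex.ofReal_im,
          Complex.mul_I_re, Complex.mul_I_im, neg_zero, add_zero, zero_add]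
        nlinarith [h1]
      · ext i j
        fin_cases i <;> fin_cases j <;>
          · simp [hmap, map_add, map_mul, map_ofNat, Complex.conj_ofReal, Complex.conj_I]
            try push_cast
            try ring
    · -- InjOn
      intro v _ w _ h
      have e00 := congrArg (fun A => A 0 0) h
      have e01 := congrArg (fun A => A 0 1) h
      simp only [hmap, Matrix.smul_apply, Matrix.cons_val', Matrix.cons_val_zero,
        Matrix.empty_val', Matrix.cons_val_fin_one, Matrix.cons_val_one, Matrix.head_cons,
        Matrix.head_fin_const, Matrix.of_apply] at e00 e01
      have hc : ((Real.pi / 2 : ℝ) : ℂ) ≠ 0 := by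
        simp [Complex.ofReal_ne_zero, hπ]
      have h0 : (v 0 : ℂ) = (w 0 : ℂ) := by
        have := mul_left_cancel₀ hc e00
        exact mul_right_cancel₀ Complex.I_ne_zero this
      have h12 : (v 1 : ℂ) + (v 2 : ℂ) * Complex.I = (w 1 : ℂ) + (w 2 : ℂ) * Complex.I :=
        mul_left_cancel₀ hc e01
      have h1 : v 1 = w 1 := by
        have := congrArg Complex.re h12
        simpa using this
      have h2 : v 2 = w 2 := by
        have := congrArg Complex.im h12
        simpa using this
      have h0' : v 0 = w 0 := by exact_mod_cast h0
      ext i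
      fin_cases i <;> assumption
    · -- SurjOn
      intro A hA
      obtain ⟨a, z, hsum, rfl⟩ := hA
      set v : EuclideanSpace ℝ (Fin 3) :=
        (WithLp.equiv 2 (Fin 3 → ℝ)).symm ![2/Real.pi * a, 2/Real.pi * z.re, 2/Real.pi * z.im]
        with hvdef
      have hv0 : v 0 = 2/Real.pi * a := rfl
      have hv1 : v 1 = 2/Real.pi * z.re := rfl
      have hv2 : v 2 = 2/Real.pi * z.im := rfl
      have habs : a^2 + (z.re^2 + z.im^2) = (Real.pi/2)^2 := by
        rw [← hsum, Complex.sq_norm, Complex.normSq_apply]; ring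
      refine ⟨v, ?_, ?_⟩
      · show ⟪v,v⟫ = 1
        rw [inner_expand, hv0, hv1, hv2]
        field_simp
        nlinarith [habs, hπ]
      · ext i j
        have hπC : (Real.pi : ℂ) ≠ 0 := by exact_mod_cast hπ
        fin_cases i <;> fin_cases j <;>
          · simp [hmap, hvdef, Complex.ext_iff]
            try norm_num
            try constructor <;> (field_simp; try ring)
            try field_simp
            try ring
  · -- quandle morphism
    intro x hx y hy
    rw [mexp_hmap_inv y hy, mexp_hmap y hy, hmap_eq, hmap_eq, Umat_sphOp]
    have hanti := Umat_anticomm x y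
    have hyy : Umat y * Umat x = ((-2 * ⟪x,y⟫ : ℝ) : ℂ) • 1 - Umat x * Umat y := by
      rw [← hanti]
      abel
    calc ((Real.pi / 2 : ℝ) : ℂ) • (((2 * ⟪x,y⟫ : ℝ) : ℂ) • Umat y - Umat x)
        = -(Umat y * (((Real.pi / 2 : ℝ) : ℂ) • Umat x) * Umat y) := by
          rw [Matrix.mul_smul, Matrix.smul_mul, hyy, Matrix.sub_mul, Matrix.smul_mul,
            Matrix.one_mul, Matrix.mul_assoc, Umat_sq y hy]
          push_cast
          simp only [Matrix.mul_neg, Matrix.mul_one, smul_sub, smul_neg, smul_smul,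
            neg_sub, sub_neg_eq_add, neg_smul, mul_neg, neg_neg]
          module
      _ = -Umat y * (((Real.pi / 2 : ℝ) : ℂ) • Umat x) * Umat y := by
          rw [Matrix.neg_mul, Matrix.neg_mul]
end

section
/- For all x, y ∈ S² ⊂ ℝ³ (unit vectors), the identity h(2⟨x,y⟩y − x) = exp(h(y))⁻¹ · h(x) · exp(h(y)) holds in the space of 2×2 complex matrices, where h(x₁,x₂,x₃) = (π/2)·[[x₁i, x₂+x₃i], [−x₂+x₃i, −x₁i]]. -/
open scoped RealInnerProductSpace

theorem stmt15 (x y : EuclideanSpace ℝ (Fin 3)) (hx : x ∈ unitSph) (hy : y ∈ unitSph) :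
    hmap (sphOp x y) = (mexp (hmap y))⁻¹ * hmap x * mexp (hmap y) := by
  have hy1 : (y 0) ^ 2 + (y 1) ^ 2 + (y 2) ^ 2 = 1 := by
    have := hy
    simp only [unitSph, Set.mem_setOf_eq, PiLp.inner_apply, RCLike.inner_apply,
      conj_trivial, Fin.sum_univ_three] at this
    nlinarith [this]
  have hc : ((y 0 : ℂ)) ^ 2 + (y 1 : ℂ) ^ 2 + (y 2 : ℂ) ^ 2 = 1 := by
    have := congrArg (Complex.ofReal) hy1
    push_cast at this
    exact this
  have hI2 : (Complex.I) ^ 2 = -1 := Complex.I_sq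
  have hI4 : (Complex.I) ^ 4 = 1 := by rw [show (4:ℕ) = 2*2 from rfl, pow_mul, hI2]; ring
  set A : Matrix (Fin 2) (Fin 2) ℂ :=
    !![(y 0 : ℂ) * Complex.I, (y 1 : ℂ) + (y 2 : ℂ) * Complex.I;
       -(y 1 : ℂ) + (y 2 : ℂ) * Complex.I, -((y 0 : ℂ) * Complex.I)] with hA
  have hA2 : A * A = -1 := by
    rw [hA]
    ext i j
    fin_cases i <;> fin_cases j <;>
        simp [Matrix.mul_apply, Fin.sum_univ_two, Matrix.one_apply] <;>
      first
        | ring1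
        | linear_combination ((y 0:ℂ)^2 + (y 2:ℂ)^2) * hI2 - hc
  set φ : ℂ →ₐ[ℝ] Matrix (Fin 2) (Fin 2) ℂ := Complex.liftAux A hA2 with hφ
  have hexpI : NormedSpace.exp (((Real.pi / 2 : ℝ) : ℂ) * Complex.I) = Complex.I := by
    rw [← Complex.exp_eq_exp_ℂ, Complex.exp_mul_I,
      ← Complex.ofReal_cos, ← Complex.ofReal_sin, Real.cos_pi_div_two, Real.sin_pi_div_two]
    simp
  have hymap : hmap y = φ (((Real.pi / 2 : ℝ) : ℂ) * Complex.I) := by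
    have : ((Real.pi / 2 : ℝ) : ℂ) * Complex.I = (Real.pi / 2 : ℝ) • Complex.I := by
      rw [Complex.real_smul]
    rw [this, map_smul, hφ, Complex.liftAux_apply_I]
    have h2 : hmap y = ((Real.pi / 2 : ℝ) : ℂ) • A := rfl
    rw [h2]
    ext i j
    rw [Matrix.smul_apply, Matrix.smul_apply, Complex.real_smul, smul_eq_mul]
  have hexp : mexp (hmap y) = A := by
    letI : SeminormedRing (Matrix (Fin 2) (Fin 2) ℂ) := Matrix.linftyOpSemiNormedRing
    letI : NormedRing (Matrix (Fin 2) (Fin 2) ℂ) := Matrix.linftyOpNormedRing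
    letI : NormedAlgebra ℝ (Matrix (Fin 2) (Fin 2) ℂ) := Matrix.linftyOpNormedAlgebra
    letI : NormedAlgebra ℂ (Matrix (Fin 2) (Fin 2) ℂ) := Matrix.linftyOpNormedAlgebra
    have hcont : Continuous φ := φ.toLinearMap.continuous_of_finiteDimensional
    rw [mexp, hymap]
    have key := NormedSpace.map_exp φ hcont (((Real.pi / 2 : ℝ) : ℂ) * Complex.I)
    rw [hexpI, hφ, Complex.liftAux_apply_I] at key
    exact key.symm
  have hinv : (mexp (hmap y))⁻¹ = -A := by
    rw [hexp]
    apply Matrix.inv_eq_right_inv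
    rw [Matrix.mul_neg, hA2, neg_neg]
  rw [hinv, hexp]
  have hip : ⟪x, y⟫ = x 0 * y 0 + x 1 * y 1 + x 2 * y 2 := by
    simp [PiLp.inner_apply, RCLike.inner_apply, Fin.sum_univ_three]
    ring
  have hs : ∀ i, sphOp x y i = 2 * (x 0 * y 0 + x 1 * y 1 + x 2 * y 2) * y i - x i := by
    intro i
    simp [sphOp, hip]
  ext i j
  have hI3 : Complex.I ^ 3 = -Complex.I := by
    rw [pow_succ, hI2]; ring
  fin_cases i <;> fin_cases j <;>
      simp [hmap, hs, Matrix.mul_apply, Fin.sum_univ_two, hA] <;>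
      push_cast <;>
      ring_nf <;>
      simp only [hI2, hI3, hI4] <;>
    first
      | ring1
      | linear_combination ((Real.pi : ℂ) * (x 0 : ℂ) * Complex.I / 2) * hc
      | linear_combination (-(Real.pi : ℂ) * (x 0 : ℂ) * Complex.I / 2) * hc
      | linear_combination ((Real.pi : ℂ) * ((x 1 : ℂ) + (x 2 : ℂ) * Complex.I) / 2) * hc
      | linear_combination (-(Real.pi : ℂ) * ((x 1 : ℂ) + (x 2 : ℂ) * Complex.I) / 2) * hc
      | linear_combination ((Real.pi : ℂ) * ((x 1 : ℂ) - (x 2 : ℂ) * Complex.I) / 2) * hc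
      | linear_combination (-(Real.pi : ℂ) * ((x 1 : ℂ) - (x 2 : ℂ) * Complex.I) / 2) * hc
      | linear_combination ((Real.pi : ℂ) * (-(x 1 : ℂ) + (x 2 : ℂ) * Complex.I) / 2) * hc
end
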